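/- (Euclidean division lemma, unequal-rank case) Let L₁, L₂ be finitely presented linear orders with ω ×ₗ (L₁ + L₂) ≅ ω ×ₗ (L₂ + L₁). If the Hausdorff rank of L₂ is strictly less than that of L₁, then ω ×ₗ L₂ is isomorphic to a prefix of L₁. -/

import Mathlib

section HausdorffDerivative

variable {M : Type} [LinearOrder M]

/-- `x ∼₁ y` iff the closed interval between `x` and `y` is finite. -/
def sim1 (x y : M) : Prop := (Set.uIcc x y).Finite

theorem sim1_refl (x : M) : sim1 x x := by simp [sim1]

theorem sim1_symm {x y : M} (h : sim1 x y) : sim1 y x := by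
  rwa [sim1, Set.uIcc_comm]

theorem sim1_trans {x y z : M} (h1 : sim1 x y) (h2 : sim1 y z) : sim1 x z :=
  Set.Finite.subset (h1.union h2) (Set.uIcc_subset_uIcc_union_uIcc)

/-- The setoid of `∼₁`-equivalence. -/
def sim1Setoid (M : Type) [LinearOrder M] : Setoid M :=
  ⟨sim1, ⟨sim1_refl, sim1_symm, sim1_trans⟩⟩

/-- The first Hausdorff derivative `M^(1)`: the linear order of `∼₁`-classes. -/
def HDeriv (M : Type) [LinearOrder M] : Type := Quotient (sim1Setoid M)

theorem sim1_le_congr {x x' y y' : M} (hx : sim1 x x') (hy : sim1 y y')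
    (h : x ≤ y ∨ sim1 x y) : x' ≤ y' ∨ sim1 x' y' := by
  by_cases hxy' : sim1 x' y'
  · exact Or.inr hxy'
  rcases h with h | h
  · left
    by_contra hlt
    push_neg at hlt
    apply hxy' (sim1_symm _)
    have hsub : Set.uIcc y' x' ⊆ Set.uIcc y' y ∪ Set.uIcc x x' := by
      intro z hz
      rw [Set.uIcc_of_le hlt.le, Set.mem_Icc] at hz
      rcases le_or_gt z y with hzy | hzy
      · exact Or.inl (Set.mem_uIcc.2 (Or.inl ⟨hz.1, hzy⟩))
      · exact Or.inr (Set.mem_uIcc.2 (Or.inl ⟨(h.trans hzy.le), hz.2⟩))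
    exact Set.Finite.subset ((sim1_symm hy).union hx) hsub
  · exact absurd (sim1_trans (sim1_trans (sim1_symm hx) h) hy) hxy'

/-- The induced order on `∼₁`-classes. -/
def HDeriv.le : HDeriv M → HDeriv M → Prop :=
  Quotient.lift₂ (fun x y => x ≤ y ∨ sim1 x y)
    (fun _ _ _ _ ha hb => propext
      ⟨sim1_le_congr ha hb, sim1_le_congr (sim1_symm ha) (sim1_symm hb)⟩)

noncomputable instance HDeriv.instLinearOrder : LinearOrder (HDeriv M) where
  le := HDeriv.le
  le_refl := by rintro ⟨x⟩; exact Or.inl le_rfl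
  le_trans := by
    rintro ⟨x⟩ ⟨y⟩ ⟨z⟩ (h1 | h1) (h2 | h2)
    · exact Or.inl (h1.trans h2)
    · rcases le_or_gt x z with h | h
      · exact Or.inl h
      · exact Or.inr (sim1_symm (Set.Finite.subset h2
          (by rw [Set.uIcc_of_le h.le, Set.uIcc_of_ge (h.le.trans h1)]
              exact Set.Icc_subset_Icc le_rfl h1)))
    · rcases le_or_gt x z with h | h
      · exact Or.inl h
      · exact Or.inr (Set.Finite.subset h1
          (by rw [Set.uIcc_of_ge h.le, Set.uIcc_of_ge (h2.trans h.le)]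
              exact Set.Icc_subset_Icc h2 le_rfl))
    · exact Or.inr (sim1_trans h1 h2)
  le_antisymm := by
    rintro ⟨x⟩ ⟨y⟩ (h1 | h1) (h2 | h2)
    · exact Quotient.sound (le_antisymm h1 h2 ▸ sim1_refl x)
    · exact Quotient.sound (sim1_symm h2)
    · exact Quotient.sound h1
    · exact Quotient.sound h1
  le_total := by
    rintro ⟨x⟩ ⟨y⟩
    rcases le_total x y with h | h
    · exact Or.inl (Or.inl h)
    · exact Or.inr (Or.inl h)
  toDecidableLE := Classical.decRel _

end HausdorffDerivative
section IterDeriv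

/-- Auxiliary: the `n`-th iterated Hausdorff derivative together with its order. -/
noncomputable def IterDerivAux (M : Type) (i : LinearOrder M) : ℕ → (T : Type) × LinearOrder T
  | 0 => ⟨M, i⟩
  | n + 1 => ⟨@HDeriv (IterDerivAux M i n).1 (IterDerivAux M i n).2,
      @HDeriv.instLinearOrder (IterDerivAux M i n).1 (IterDerivAux M i n).2⟩

/-- The `n`-th iterated Hausdorff derivative `M^(n)`. -/
noncomputable def IterDeriv (M : Type) [i : LinearOrder M] (n : ℕ) : Type :=
  (IterDerivAux M i n).1

noncomputable instance (M : Type) [i : LinearOrder M] (n : ℕ) : LinearOrder (IterDeriv M n) :=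
  (IterDerivAux M i n).2

/-- The (finite) Hausdorff rank: the least `n` such that `M^(n)` is finite. -/
noncomputable def hrank (M : Type) [LinearOrder M] : ℕ :=
  sInf {n : ℕ | Finite (IterDeriv M n)}

end IterDeriv

/-- The class of finitely presented linear orders: the smallest
isomorphism-closed class containing `0` and `1` and closed under binary ordered
sums and the operations `L ↦ ω ×ₗ L` and `L ↦ ω* ×ₗ L`
(here `ℕ ×ₗ A = ∑_{n∈ω} A` and `ℕᵒᵈ ×ₗ A = ∑_{n∈ω*} A`). -/
inductive IsFP : (L : Type) → [_inst : LinearOrder L] → Prop where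
  | zero : IsFP (Fin 0)
  | one : IsFP (Fin 1)
  | iso {A B : Type} [LinearOrder A] [LinearOrder B] :
      IsFP A → Nonempty (A ≃o B) → IsFP B
  | sum {A B : Type} [LinearOrder A] [LinearOrder B] :
      IsFP A → IsFP B → IsFP (A ⊕ₗ B)
  | omega {A : Type} [LinearOrder A] : IsFP A → IsFP (ℕ ×ₗ A)
  | omegaStar {A : Type} [LinearOrder A] : IsFP A → IsFP (ℕᵒᵈ ×ₗ A)

/-!
Regrouping blocks gives `ω ×ₗ (A + B) ≅ A + ω ×ₗ (B + A)`, so the hypothesis yields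
`L₂ + M ≅ M` for `M = ω ×ₗ (L₁ + L₂)`, and unfolding this isomorphism places a copy of
`ω ×ₗ L₂` at the start of `M`. The first block of `M` is a copy of `L₁`, and of two
initial segments of a linear order one contains the other. If `ω ×ₗ L₂` fits inside `L₁` we
are done. Otherwise `L₁` is an initial segment of `ω ×ₗ L₂`: either all of it, or contained
in finitely many copies of `L₂`, and then the Hausdorff rank of `L₁` is at most that of `L₂`.

Ranks are computed through the quotient maps `M → M^(n)`: a convex embedding `A ↪ M` identifies
`A^(n)` with the image of `A` in `M^(n)`, so finiteness of derivatives can be checked on covers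
by convex pieces.
-/

open Set Sum

theorem Set.surjOn_uIcc_of_monotone_surjective {α β : Type*} [LinearOrder α] [LinearOrder β]
    {f : α → β} (hf : Monotone f) (hs : Function.Surjective f) (a b : α) :
    SurjOn f (uIcc a b) (uIcc (f a) (f b)) := by
  rcases le_total a b with h | h
  · rw [uIcc_of_le h, uIcc_of_le (hf h)]
    exact surjOn_Icc_of_monotone_surjective hf hs h
  · rw [uIcc_of_ge h, uIcc_of_ge (hf h)]
    exact surjOn_Icc_of_monotone_surjective hf hs h

theorem Set.OrdConnected.image_of_monotone_surjective {α β : Type*} [LinearOrder α]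
    [LinearOrder β] {f : α → β} (hf : Monotone f) (hs : Function.Surjective f) {s : Set α}
    (h : s.OrdConnected) : (f '' s).OrdConnected := by
  refine ⟨?_⟩
  rintro _ ⟨x, hx, rfl⟩ _ ⟨y, hy, rfl⟩
  exact Icc_subset_uIcc.trans
    ((surjOn_uIcc_of_monotone_surjective hf hs x y).trans (image_mono (h.uIcc_subset hx hy)))

theorem OrderEmbedding.image_uIcc {α β : Type*} [LinearOrder α] [LinearOrder β] (e : α ↪o β)
    (he : (range e).OrdConnected) (x y : α) : e '' uIcc x y = uIcc (e x) (e y) := by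
  rcases le_total x y with h | h
  · rw [uIcc_of_le h, uIcc_of_le (e.monotone h), e.image_Icc he]
  · rw [uIcc_of_ge h, uIcc_of_ge (e.monotone h), e.image_Icc he]

section Derivative

variable {A M : Type} [LinearOrder A] [LinearOrder M]

theorem sim1_apply_iff (e : A ↪o M) (he : (range e).OrdConnected) {x y : A} :
    sim1 (e x) (e y) ↔ sim1 x y := by
  rw [sim1, sim1, ← e.image_uIcc he, Set.finite_image_iff e.injective.injOn]

namespace HDeriv

def mk (x : M) : HDeriv M := Quotient.mk (sim1Setoid M) x

theorem mk_surjective : Function.Surjective (mk (M := M)) := Quotient.mk_surjective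

theorem mk_eq_mk {x y : M} : mk x = mk y ↔ sim1 x y := Quotient.eq

theorem monotone_mk : Monotone (mk (M := M)) := fun _ _ h => Or.inl h

noncomputable def map (e : A ↪o M) (he : (range e).OrdConnected) : HDeriv A ↪o HDeriv M :=
  OrderEmbedding.ofMapLEIff (Quotient.map e fun _ _ => (sim1_apply_iff e he).2) <| by
    rintro ⟨x⟩ ⟨y⟩
    change e x ≤ e y ∨ sim1 (e x) (e y) ↔ x ≤ y ∨ sim1 x y
    rw [e.le_iff_le, sim1_apply_iff e he]

theorem range_map (e : A ↪o M) (he : (range e).OrdConnected) :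
    range (map e he) = mk '' range e := by
  rw [← mk_surjective.range_comp, ← range_comp]
  rfl

end HDeriv

namespace IterDeriv

noncomputable def mk : ∀ n, M → IterDeriv M n
  | 0 => id
  | n + 1 => fun x => (HDeriv.mk (mk n x) : HDeriv (IterDeriv M n))

theorem monotone_mk : ∀ n, Monotone (mk (M := M) n)
  | 0 => monotone_id
  | n + 1 => HDeriv.monotone_mk.comp (monotone_mk n)

theorem mk_surjective : ∀ n, Function.Surjective (mk (M := M) n)
  | 0 => Function.surjective_id
  | n + 1 => HDeriv.mk_surjective.comp (mk_surjective n)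

theorem exists_embedding_range_eq (e : A ↪o M) (he : (range e).OrdConnected) :
    ∀ n, ∃ g : IterDeriv A n ↪o IterDeriv M n, range g = mk n '' range e
  | 0 => ⟨e, (image_id _).symm⟩
  | n + 1 => by
    obtain ⟨g, hg⟩ := exists_embedding_range_eq e he n
    have hconv : (range g).OrdConnected :=
      hg ▸ he.image_of_monotone_surjective (monotone_mk n) (mk_surjective n)
    show ∃ g : HDeriv (IterDeriv A n) ↪o HDeriv (IterDeriv M n), range g = mk (n + 1) '' range e
    refine ⟨HDeriv.map g hconv, ?_⟩
    rw [HDeriv.range_map, hg, image_image]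
    rfl

theorem finite_iff_finite_image (e : A ↪o M) (he : (range e).OrdConnected) (n : ℕ) :
    Finite (IterDeriv A n) ↔ (mk n '' range e).Finite := by
  obtain ⟨g, hg⟩ := exists_embedding_range_eq e he n
  rw [← hg, finite_range_iff g.injective]

theorem finite_iff_finite_range (n : ℕ) :
    Finite (IterDeriv M n) ↔ (range (mk (M := M) n)).Finite := by
  rw [(mk_surjective n).range_eq, finite_univ_iff]

theorem _root_.OrderIso.finite_iterDeriv_iff (e : A ≃o M) (n : ℕ) :
    Finite (IterDeriv A n) ↔ Finite (IterDeriv M n) := by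
  have hrange : range e.toOrderEmbedding = univ := e.surjective.range_eq
  rw [finite_iff_finite_image e.toOrderEmbedding (hrange ▸ ordConnected_univ), hrange,
    image_univ, finite_iff_finite_range]

theorem finite_succ {n : ℕ} (h : Finite (IterDeriv M n)) : Finite (IterDeriv M (n + 1)) :=
  Finite.of_surjective (HDeriv.mk : IterDeriv M n → HDeriv (IterDeriv M n)) HDeriv.mk_surjective

theorem finite_of_le {m n : ℕ} (hmn : m ≤ n) (h : Finite (IterDeriv M m)) :
    Finite (IterDeriv M n) := by
  induction n, hmn using Nat.le_induction with
  | base => exact h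
  | succ n _ ih => exact finite_succ ih

end IterDeriv

end Derivative

section FiniteRank

variable {α A B : Type} [LinearOrder α] [LinearOrder A] [LinearOrder B]

def Prod.Lex.fiberEmbedding (k : α) : B ↪o α ×ₗ B :=
  OrderEmbedding.ofStrictMono (fun b => toLex (k, b)) fun _ _ h =>
    Prod.Lex.toLex_lt_toLex.2 (Or.inr ⟨rfl, h⟩)

theorem Prod.Lex.range_fiberEmbedding (k : α) :
    range (fiberEmbedding (B := B) k) = {p | (ofLex p).1 = k} := by
  ext p
  constructor
  · rintro ⟨b, rfl⟩
    rfl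
  · intro hp
    exact ⟨(ofLex p).2, congrArg toLex (Prod.ext hp.symm rfl)⟩

theorem Prod.Lex.ordConnected_range_fiberEmbedding (k : α) :
    (range (fiberEmbedding (B := B) k)).OrdConnected := by
  rw [range_fiberEmbedding]
  refine ⟨fun x hx y hy z hz => le_antisymm ?_ ?_⟩
  · exact hy ▸ monotone_fst_ofLex hz.2
  · exact hx ▸ monotone_fst_ofLex hz.1

theorem finite_image_iterDerivMk_of_finite_fst {n : ℕ} (hB : Finite (IterDeriv B n))
    {S : Set (α ×ₗ B)} (hS : ((fun p => (ofLex p).1) '' S).Finite) :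
    (IterDeriv.mk n '' S).Finite := by
  have hcover :
      S ⊆ ⋃ k ∈ (fun p => (ofLex p).1) '' S, range (Prod.Lex.fiberEmbedding (B := B) k) :=
    fun p hp => mem_biUnion (mem_image_of_mem _ hp) (by rw [Prod.Lex.range_fiberEmbedding]; rfl)
  refine ((hS.biUnion (t := fun k => IterDeriv.mk n '' range (Prod.Lex.fiberEmbedding k))
    fun k _ => ?_).subset ?_)
  · exact (IterDeriv.finite_iff_finite_image _
      (Prod.Lex.ordConnected_range_fiberEmbedding k) n).1 hB
  · exact (image_mono hcover).trans (image_iUnion₂ _ _).subset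

theorem finite_iterDeriv_succ_prodLex [LocallyFiniteOrder α] {n : ℕ}
    (hB : Finite (IterDeriv B n)) : Finite (IterDeriv (α ×ₗ B) (n + 1)) := by
  -- An interval of `α ×ₗ B` meets finitely many fibres, each with finite image in the `n`-th
  -- derivative, so any two points of the `n`-th derivative are `∼₁`-equivalent.
  suffices Subsingleton (IterDeriv (α ×ₗ B) (n + 1)) from Finite.of_subsingleton
  refine ⟨fun u v => ?_⟩
  obtain ⟨x, rfl⟩ := IterDeriv.mk_surjective (n + 1) u
  obtain ⟨y, rfl⟩ := IterDeriv.mk_surjective (n + 1) v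
  refine HDeriv.mk_eq_mk.2 (Set.Finite.subset ?_ (surjOn_uIcc_of_monotone_surjective
    (IterDeriv.monotone_mk n) (IterDeriv.mk_surjective n) x y))
  exact finite_image_iterDerivMk_of_finite_fst hB
    ((finite_uIcc _ _).subset (Prod.Lex.monotone_fst_ofLex.mapsTo_uIcc.image_subset))

def Sum.Lex.inlEmbedding : A ↪o A ⊕ₗ B :=
  OrderEmbedding.ofStrictMono (fun a => toLex (inl a)) fun _ _ => Sum.Lex.inl_lt_inl_iff.2

def Sum.Lex.inrEmbedding : B ↪o A ⊕ₗ B :=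
  OrderEmbedding.ofStrictMono (fun b => toLex (inr b)) fun _ _ => Sum.Lex.inr_lt_inr_iff.2

theorem Sum.Lex.isLowerSet_range_inlEmbedding :
    IsLowerSet (range (inlEmbedding (A := A) (B := B))) := by
  rintro _ z hz ⟨a, rfl⟩
  obtain ⟨z | b, rfl⟩ := toLex.surjective z
  · exact ⟨z, rfl⟩
  · exact absurd hz not_inr_le_inl

theorem Sum.Lex.isUpperSet_range_inrEmbedding :
    IsUpperSet (range (inrEmbedding (A := A) (B := B))) := by
  rintro _ z hz ⟨b, rfl⟩
  obtain ⟨a | z, rfl⟩ := toLex.surjective z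
  · exact absurd hz not_inr_le_inl
  · exact ⟨z, rfl⟩

theorem Sum.Lex.range_inlEmbedding_union_range_inrEmbedding :
    range (inlEmbedding (A := A) (B := B)) ∪ range inrEmbedding = univ := by
  refine eq_univ_of_forall fun z => ?_
  obtain ⟨a | b, rfl⟩ := toLex.surjective z
  · exact Or.inl ⟨a, rfl⟩
  · exact Or.inr ⟨b, rfl⟩

theorem finite_iterDeriv_sumLex {n : ℕ} (hA : Finite (IterDeriv A n))
    (hB : Finite (IterDeriv B n)) : Finite (IterDeriv (A ⊕ₗ B) n) := by
  rw [IterDeriv.finite_iff_finite_range, ← image_univ,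
    ← Sum.Lex.range_inlEmbedding_union_range_inrEmbedding, image_union]
  exact ((IterDeriv.finite_iff_finite_image _
      Sum.Lex.isLowerSet_range_inlEmbedding.ordConnected n).1 hA).union
    ((IterDeriv.finite_iff_finite_image _
      Sum.Lex.isUpperSet_range_inrEmbedding.ordConnected n).1 hB)

theorem IsFP.exists_finite_iterDeriv {L : Type} [LinearOrder L] (h : IsFP L) :
    ∃ n, Finite (IterDeriv L n) := by
  induction h with
  | zero => exact ⟨0, inferInstanceAs (Finite (Fin 0))⟩
  | one => exact ⟨0, inferInstanceAs (Finite (Fin 1))⟩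
  | iso _ he ih =>
    obtain ⟨n, hn⟩ := ih
    exact ⟨n, (he.some.finite_iterDeriv_iff n).1 hn⟩
  | sum _ _ ihA ihB =>
    obtain ⟨m, hm⟩ := ihA
    obtain ⟨n, hn⟩ := ihB
    exact ⟨max m n, finite_iterDeriv_sumLex (IterDeriv.finite_of_le (le_max_left m n) hm)
      (IterDeriv.finite_of_le (le_max_right m n) hn)⟩
  | omega _ ih =>
    obtain ⟨n, hn⟩ := ih
    exact ⟨n + 1, finite_iterDeriv_succ_prodLex hn⟩
  | omegaStar _ ih =>
    obtain ⟨n, hn⟩ := ih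
    exact ⟨n + 1, finite_iterDeriv_succ_prodLex hn⟩

end FiniteRank


section InitialSegments

variable {A B M : Type} [LinearOrder A] [LinearOrder B] [LinearOrder M]

def OrderEmbedding.toInitialSeg (f : A ↪o M) (hf : IsLowerSet (range f)) : A ≤i M where
  toRelEmbedding := f.ltEmbedding
  mem_range_of_rel' _ _ h := hf h.le ⟨_, rfl⟩

theorem InitialSeg.nonempty_of_range_subset (f : A ≤i M) (g : B ≤i M)
    (hfg : range f ⊆ range g) : Nonempty (A ≤i B) := by
  choose k hk using fun a => hfg ⟨a, rfl⟩
  let k' : A ↪o B :=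
    OrderEmbedding.ofMapLEIff k fun a b => by rw [← g.le_iff_le, hk, hk, f.le_iff_le]
  refine ⟨k'.toInitialSeg ?_⟩
  rintro b _ hb ⟨a, rfl⟩
  obtain ⟨a', ha'⟩ := f.mem_range_of_le ((g.monotone hb).trans_eq (hk a))
  exact ⟨a', g.injective ((hk a').trans ha')⟩

theorem InitialSeg.nonempty_or_nonempty (f : A ≤i M) (g : B ≤i M) :
    Nonempty (A ≤i B) ∨ Nonempty (B ≤i A) :=
  (f.isLowerSet_range.total g.isLowerSet_range).imp (f.nonempty_of_range_subset g)
    (g.nonempty_of_range_subset f)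

theorem InitialSeg.exists_sumLex_orderIso (f : A ≤i M) :
    ∃ (Q : Type) (_ : LinearOrder Q), Nonempty ((A ⊕ₗ Q) ≃o M) := by
  let g : A ⊕ₗ ↥(range f)ᶜ → M := fun x => Sum.elim f Subtype.val (ofLex x)
  have hg : StrictMono g := by
    intro x y hxy
    obtain ⟨a | ⟨m, hm⟩, rfl⟩ := toLex.surjective x <;>
      obtain ⟨b | ⟨n, hn⟩, rfl⟩ := toLex.surjective y
    · exact f.strictMono (Sum.Lex.inl_lt_inl_iff.1 hxy)
    · exact lt_of_not_ge fun h => hn (f.mem_range_of_le h)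
    · exact absurd hxy Sum.Lex.not_inr_lt_inl
    · exact Subtype.coe_lt_coe.2 (Sum.Lex.inr_lt_inr_iff.1 hxy)
  have hs : Function.Surjective g := fun m => by
    by_cases hm : m ∈ range f
    · obtain ⟨a, rfl⟩ := hm
      exact ⟨toLex (inl a), rfl⟩
    · exact ⟨toLex (inr ⟨m, hm⟩), rfl⟩
  exact ⟨_, inferInstance, ⟨hg.orderIsoOfSurjective g hs⟩⟩

end InitialSegments

section Rotate

variable {A B : Type}

def Equiv.natProdLexSumLexRotate : ℕ ×ₗ (A ⊕ₗ B) ≃ A ⊕ₗ ℕ ×ₗ (B ⊕ₗ A) where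
  toFun
    | (n, inr b) => toLex (inr (toLex (n, toLex (inl b))))
    | (0, inl a) => toLex (inl a)
    | (n + 1, inl a) => toLex (inr (toLex (n, toLex (inr a))))
  invFun
    | inl a => toLex (0, toLex (inl a))
    | inr (n, inl b) => toLex (n, toLex (inr b))
    | inr (n, inr a) => toLex (n + 1, toLex (inl a))
  left_inv := by rintro ⟨_ | n, a | b⟩ <;> rfl
  right_inv := by rintro (a | ⟨n, b | a⟩) <;> rfl

namespace Equiv

@[simp]
theorem natProdLexSumLexRotate_inr (n : ℕ) (b : B) :
    natProdLexSumLexRotate (toLex (n, toLex (inr b)) : ℕ ×ₗ (A ⊕ₗ B)) =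
      toLex (inr (toLex (n, toLex (inl b)))) := rfl

@[simp]
theorem natProdLexSumLexRotate_zero_inl (a : A) :
    natProdLexSumLexRotate (toLex (0, toLex (inl a)) : ℕ ×ₗ (A ⊕ₗ B)) = toLex (inl a) :=
  rfl

@[simp]
theorem natProdLexSumLexRotate_succ_inl (n : ℕ) (a : A) :
    natProdLexSumLexRotate (toLex (n + 1, toLex (inl a)) : ℕ ×ₗ (A ⊕ₗ B)) =
      toLex (inr (toLex (n, toLex (inr a)))) := rfl

end Equiv

/-- `ω ×ₗ (A + B) ≅ A + ω ×ₗ (B + A)`: the sum `A + B + A + B + ⋯` regrouped as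
`A + (B + A) + (B + A) + ⋯`. -/
def OrderIso.natProdLexSumLexRotate [LinearOrder A] [LinearOrder B] :
    ℕ ×ₗ (A ⊕ₗ B) ≃o A ⊕ₗ ℕ ×ₗ (B ⊕ₗ A) where
  toEquiv := Equiv.natProdLexSumLexRotate
  map_rel_iff' := by
    intro x y
    obtain ⟨⟨m, u⟩, rfl⟩ := toLex.surjective x
    obtain ⟨⟨n, v⟩, rfl⟩ := toLex.surjective y
    obtain ⟨a | b, rfl⟩ := toLex.surjective u <;>
      obtain ⟨c | d, rfl⟩ := toLex.surjective v <;>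
      rcases m with _ | m <;> rcases n with _ | n <;> simp [Prod.Lex.toLex_le_toLex] <;> omega

end Rotate

section Unfold

variable {B M : Type} [LinearOrder B] [LinearOrder M] (θ : B ⊕ₗ M ≃o M)

def OrderIso.unfold : ℕ → B → M
  | 0, b => θ (toLex (inl b))
  | n + 1, b => θ (toLex (inr (OrderIso.unfold n b)))

theorem OrderIso.unfold_lt_unfold_iff {m n : ℕ} {x y : B} :
    θ.unfold m x < θ.unfold n y ↔ toLex (m, x) < toLex (n, y) := by
  induction m generalizing n with
  | zero => cases n <;> simp [unfold, Prod.Lex.toLex_lt_toLex]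
  | succ m ih =>
    cases n
    · simp [unfold, Prod.Lex.toLex_lt_toLex]
    · rw [unfold, unfold, θ.lt_iff_lt, Sum.Lex.inr_lt_inr_iff, ih]
      simp [Prod.Lex.toLex_lt_toLex]

theorem OrderIso.exists_unfold_eq_of_lt {n : ℕ} {x : B} {z : M} (hz : z < θ.unfold n x) :
    ∃ m y, θ.unfold m y = z := by
  obtain ⟨w, rfl⟩ := θ.surjective z
  obtain ⟨b | w, rfl⟩ := toLex.surjective w
  · exact ⟨0, b, rfl⟩
  cases n with
  | zero => exact absurd (θ.lt_iff_lt.1 hz) Sum.Lex.not_inr_lt_inl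
  | succ n =>
    rw [unfold, θ.lt_iff_lt, Sum.Lex.inr_lt_inr_iff] at hz
    obtain ⟨m, y, rfl⟩ := OrderIso.exists_unfold_eq_of_lt hz
    exact ⟨m + 1, y, rfl⟩

def OrderIso.unfoldInitialSeg : ℕ ×ₗ B ≤i M :=
  (OrderEmbedding.ofStrictMono (fun p => θ.unfold (ofLex p).1 (ofLex p).2)
    fun _ _ h => θ.unfold_lt_unfold_iff.2 h).toInitialSeg <| by
      rintro _ z hz ⟨p, rfl⟩
      rcases hz.eq_or_lt with rfl | hlt
      · exact ⟨p, rfl⟩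
      · obtain ⟨m, y, rfl⟩ := θ.exists_unfold_eq_of_lt hlt
        exact ⟨toLex (m, y), rfl⟩

end Unfold

theorem InitialSeg.finite_iterDeriv_of_not_surjective {α A B : Type} [LinearOrder α]
    [LocallyFiniteOrderBot α] [LinearOrder A] [LinearOrder B] {n : ℕ} (f : A ≤i α ×ₗ B)
    (hf : ¬Function.Surjective f) (hB : Finite (IterDeriv B n)) : Finite (IterDeriv A n) := by
  obtain ⟨q, hq⟩ := not_forall.1 hf
  have hlt : ∀ a, f a < q := fun a => lt_of_not_ge fun h => hq (f.mem_range_of_le h)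
  rw [IterDeriv.finite_iff_finite_image f.toOrderEmbedding f.isLowerSet_range.ordConnected]
  refine finite_image_iterDerivMk_of_finite_fst hB ((finite_Iic (ofLex q).1).subset ?_)
  rintro _ ⟨_, ⟨a, rfl⟩, rfl⟩
  exact Prod.Lex.monotone_fst_ofLex (hlt a).le

theorem hrank_le {M : Type} [LinearOrder M] {n : ℕ} (h : Finite (IterDeriv M n)) :
    hrank M ≤ n :=
  Nat.sInf_le h

theorem IsFP.finite_iterDeriv_hrank {L : Type} [LinearOrder L] (h : IsFP L) :
    Finite (IterDeriv L (hrank L)) :=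
  Nat.sInf_mem h.exists_finite_iterDeriv

theorem stmt_18_general (L₁ L₂ : Type) [LinearOrder L₁] [LinearOrder L₂]
    (h₂ : IsFP L₂)
    (hiso : Nonempty ((ℕ ×ₗ (L₁ ⊕ₗ L₂)) ≃o (ℕ ×ₗ (L₂ ⊕ₗ L₁))))
    (hrk : hrank L₂ < hrank L₁) :
    ∃ (Q : Type) (_ : LinearOrder Q), Nonempty (((ℕ ×ₗ L₂) ⊕ₗ Q) ≃o L₁) := by
  obtain ⟨e⟩ := hiso
  let θ : L₂ ⊕ₗ ℕ ×ₗ (L₁ ⊕ₗ L₂) ≃o ℕ ×ₗ (L₁ ⊕ₗ L₂) :=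
    OrderIso.natProdLexSumLexRotate.symm.trans e.symm
  let ι : L₁ ≤i ℕ ×ₗ (L₁ ⊕ₗ L₂) :=
    (Sum.Lex.inlEmbedding.toInitialSeg Sum.Lex.isLowerSet_range_inlEmbedding).trans
      OrderIso.natProdLexSumLexRotate.symm.toInitialSeg
  suffices Nonempty (ℕ ×ₗ L₂ ≤i L₁) from this.some.exists_sumLex_orderIso
  refine (θ.unfoldInitialSeg.nonempty_or_nonempty ι).elim id fun ⟨f⟩ => ?_
  by_cases hf : Function.Surjective f
  · exact ⟨(OrderIso.ofSurjective f.toOrderEmbedding hf).symm.toInitialSeg⟩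
  · exact absurd (hrank_le (f.finite_iterDeriv_of_not_surjective hf h₂.finite_iterDeriv_hrank))
      hrk.not_ge

/-- Euclidean division lemma, unequal-rank case: if `L₁, L₂` are finitely
presented with `ω ×ₗ (L₁ + L₂) ≅ ω ×ₗ (L₂ + L₁)` and the Hausdorff rank of `L₂`
is strictly smaller than that of `L₁`, then `ω ×ₗ L₂` is isomorphic to a prefix
of `L₁`. -/
theorem stmt_18 (L₁ L₂ : Type) [LinearOrder L₁] [LinearOrder L₂]
    (h₁ : IsFP L₁) (h₂ : IsFP L₂)
    (hiso : Nonempty ((ℕ ×ₗ (L₁ ⊕ₗ L₂)) ≃o (ℕ ×ₗ (L₂ ⊕ₗ L₁))))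
    (hrk : hrank L₂ < hrank L₁) :
    ∃ (Q : Type) (_ : LinearOrder Q), Nonempty (((ℕ ×ₗ L₂) ⊕ₗ Q) ≃o L₁) :=
  stmt_18_general L₁ L₂ h₂ hiso hrk
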